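/- arXiv:1508.04983 — 4 statements merged into one kernel-verified Lean document; each statement's English description precedes it below -/
import Mathlib

section
/- Let M₁,…,M_N be Metzler matrices (real matrices with nonnegative off-diagonal entries) of size n×n. The system {x ∈ R₊^n : xᵀ M_i x ≥ 0 for all i, ‖x‖ = 1} is infeasible if and only if the semidefinite system {X ⪰ 0 : tr(M_i X) ≥ 0 for all i, tr(X) = 1} is infeasible. -/
noncomputable def opNorm {m n : ℕ} (A : Matrix (Fin m) (Fin n) ℝ) : ℝ :=
  ‖(Matrix.toEuclideanLin A).toContinuousLinearMap‖

noncomputable def opNormC {m n : ℕ} (A : Matrix (Fin m) (Fin n) ℂ) : ℝ :=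
  ‖(Matrix.toEuclideanLin A).toContinuousLinearMap‖

noncomputable def enorm {m : ℕ} (p : Fin m → ℝ) : ℝ :=
  Real.sqrt (∑ i, p i ^ 2)

noncomputable def cnorm {m : ℕ} (p : Fin m → ℂ) : ℝ :=
  Real.sqrt (∑ i, ‖p i‖ ^ 2)

noncomputable def specRad {m : ℕ} (A : Matrix (Fin m) (Fin m) ℂ) : ENNReal :=
  spectralRadius ℂ A

lemma psd_diag {n : ℕ} (X : Matrix (Fin n) (Fin n) ℝ) (hX : X.PosSemidef) (a : Fin n) :
    0 ≤ X a a := by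
  have h := (Matrix.posSemidef_iff_dotProduct_mulVec.mp hX).2 (fun i => if i = a then (1:ℝ) else 0)
  simpa [dotProduct, Matrix.mulVec, Finset.mul_sum, mul_ite] using h

lemma psd_entry {n : ℕ} (X : Matrix (Fin n) (Fin n) ℝ) (hX : X.PosSemidef) (a b : Fin n) :
    X a b ≤ Real.sqrt (X a a) * Real.sqrt (X b b) := by
  have hsym : X b a = X a b := by
    have := hX.1; rw [Matrix.IsHermitian] at this
    conv_lhs => rw [← this]
    simp [Matrix.conjTranspose]
  have key : ∀ t : ℝ, 0 ≤ X b b * (t * t) + (2 * X a b) * t + X a a := by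
    intro t
    have h := (Matrix.posSemidef_iff_dotProduct_mulVec.mp hX).2 (fun i => (if i = a then (1:ℝ) else 0) + t * (if i = b then 1 else 0))
    simp only [star_trivial, dotProduct, Matrix.mulVec] at h
    have : ∑ i, ((if i = a then (1:ℝ) else 0) + t * (if i = b then 1 else 0)) *
        ∑ j, X i j * ((if j = a then (1:ℝ) else 0) + t * (if j = b then 1 else 0)) =
        X b b * (t * t) + (2 * X a b) * t + X a a := by
      have inner : ∀ i, (∑ j, X i j * ((if j = a then (1:ℝ) else 0) + t * (if j = b then 1 else 0)))
          = X i a + t * X i b := by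
        intro i
        simp [mul_add, Finset.sum_add_distrib, mul_ite, mul_comm, Finset.mul_sum]
      simp only [inner]
      rw [Finset.sum_congr rfl (fun i _ => by split_ifs <;> ring :
        ∀ i ∈ Finset.univ, ((if i = a then (1:ℝ) else 0) + t * (if i = b then 1 else 0)) * (X i a + t * X i b)
          = (if i = a then X i a + t * X i b else 0) + t * (if i = b then X i a + t * X i b else 0))]
      simp [Finset.sum_add_distrib, hsym]
      ring
    rw [this] at h; exact h
  rcases eq_or_lt_of_le (psd_diag X hX b) with hbb | hbb
  · have hab : X a b = 0 := by
      by_contra hne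
      have h := key ((-(X a a) - 1) / (2 * X a b))
      rw [← hbb] at h
      field_simp at h
      rw [le_div_iff₀ (by positivity)] at h
      nlinarith [sq_nonneg (X a b), (by positivity : (0:ℝ) < X a b ^ 2)]
    rw [hab]
    positivity
  · have hd := discrim_le_zero key
    unfold discrim at hd
    have h2 : X a b ^ 2 ≤ X a a * X b b := by nlinarith
    calc X a b ≤ |X a b| := le_abs_self _
    _ = Real.sqrt (X a b ^ 2) := (Real.sqrt_sq_eq_abs _).symm
    _ ≤ Real.sqrt (X a a * X b b) := Real.sqrt_le_sqrt h2
    _ = _ := Real.sqrt_mul (psd_diag X hX a) _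

lemma psd_outer {n : ℕ} (x : Fin n → ℝ) : (Matrix.vecMulVec x x).PosSemidef := by
  rw [Matrix.posSemidef_iff_dotProduct_mulVec]
  constructor
  · ext a b; simp [Matrix.vecMulVec, Matrix.conjTranspose, mul_comm]
  · intro y
    have : dotProduct (star y) ((Matrix.vecMulVec x x).mulVec y) = (∑ i, x i * y i)^2 := by
      rw [sq, Finset.sum_mul_sum]
      simp [dotProduct, Matrix.mulVec, Matrix.vecMulVec, Finset.mul_sum]
      congr 1; ext i; congr 1; ext j; ring
    rw [this]; positivity

theorem stmt8 {n N : ℕ} (M : Fin N → Matrix (Fin n) (Fin n) ℝ)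
    (hMetzler : ∀ i, ∀ a b, a ≠ b → 0 ≤ M i a b) :
    (¬ ∃ x : Fin n → ℝ, (∀ j, 0 ≤ x j) ∧
        (∀ i, 0 ≤ dotProduct x ((M i).mulVec x)) ∧ _root_.enorm x = 1) ↔
      (¬ ∃ X : Matrix (Fin n) (Fin n) ℝ, X.PosSemidef ∧
        (∀ i, 0 ≤ (M i * X).trace) ∧ X.trace = 1) := by
  apply not_iff_not.mpr
  constructor
  · rintro ⟨x, hx0, hxM, hxn⟩
    refine ⟨Matrix.vecMulVec x x, psd_outer x, ?_, ?_⟩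
    · intro i
      have : (M i * Matrix.vecMulVec x x).trace = dotProduct x ((M i).mulVec x) := by
        simp only [Matrix.trace, Matrix.diag, Matrix.mul_apply, Matrix.vecMulVec_apply,
          dotProduct, Matrix.mulVec, Finset.mul_sum]
        congr 1; ext a; congr 1; ext b; ring
      rw [this]; exact hxM i
    · have hs : ∑ i, x i ^ 2 = 1 := by
        have hnn : 0 ≤ ∑ i, x i ^ 2 := Finset.sum_nonneg fun i _ => sq_nonneg _
        have h1 := hxn
        unfold _root_.enorm at h1
        nlinarith [Real.sq_sqrt hnn, Real.sqrt_nonneg (∑ i, x i ^ 2)]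
      simpa [Matrix.trace, Matrix.diag, Matrix.vecMulVec_apply, sq] using hs
  · rintro ⟨X, hX, hMX, htr⟩
    refine ⟨fun i => Real.sqrt (X i i), fun j => Real.sqrt_nonneg _, ?_, ?_⟩
    · intro i
      refine le_trans (hMX i) ?_
      simp only [Matrix.trace, Matrix.diag, Matrix.mul_apply, dotProduct, Matrix.mulVec,
        Finset.mul_sum]
      refine Finset.sum_le_sum fun a _ => Finset.sum_le_sum fun b _ => ?_
      rcases eq_or_ne a b with rfl | hab
      · rw [show Real.sqrt (X a a) * (M i a a * Real.sqrt (X a a))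
            = M i a a * (Real.sqrt (X a a) * Real.sqrt (X a a)) by ring,
          Real.mul_self_sqrt (psd_diag X hX a)]
      · have h1 : X b a ≤ Real.sqrt (X b b) * Real.sqrt (X a a) := psd_entry X hX b a
        have h2 := mul_le_mul_of_nonneg_left h1 (hMetzler i a b hab)
        calc M i a b * X b a ≤ M i a b * (Real.sqrt (X b b) * Real.sqrt (X a a)) := h2
          _ = Real.sqrt (X a a) * (M i a b * Real.sqrt (X b b)) := by ring
    · unfold _root_.enorm
      have : ∑ i, Real.sqrt (X i i) ^ 2 = 1 := by
        rw [← htr]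
        simp only [Matrix.trace, Matrix.diag]
        exact Finset.sum_congr rfl fun i _ => Real.sq_sqrt (psd_diag X hX i)
      rw [this, Real.sqrt_one]
end

section
/- Let M be a Metzler n×n matrix and X ⪰ 0 a positive semidefinite matrix. Define the vector x ∈ R₊^n by x_i = √(X_{ii}). Then xᵀ M x ≥ tr(M X). -/
theorem stmt9 {n : ℕ} (M X : Matrix (Fin n) (Fin n) ℝ)
    (hMetzler : ∀ a b, a ≠ b → 0 ≤ M a b) (hX : X.PosSemidef) :
    let x : Fin n → ℝ := fun i => Real.sqrt (X i i)
    (M * X).trace ≤ dotProduct x (M.mulVec x) := by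
  intro x
  obtain ⟨B, hB⟩ : ∃ B : Matrix (Fin n) (Fin n) ℝ, X = B.conjTranspose * B := by
    open scoped MatrixOrder Matrix.Norms.L2Operator in
    exact CStarAlgebra.nonneg_iff_eq_star_mul_self.mp hX.nonneg
  have hEntry : ∀ i j, X i j = ∑ k, B k i * B k j := by
    intro i j
    simp [hB, Matrix.mul_apply, Matrix.conjTranspose_apply]
  have hdiag : ∀ i, 0 ≤ X i i := by
    intro i
    rw [hEntry]
    exact Finset.sum_nonneg fun k _ => mul_self_nonneg _
  have hCS : ∀ i j, X i j ≤ x i * x j := by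
    intro i j
    have h1 : (X i j) ^ 2 ≤ X i i * X j j := by
      rw [hEntry i j, hEntry i i, hEntry j j]
      simpa [sq] using Finset.sum_mul_sq_le_sq_mul_sq Finset.univ (fun k => B k i) (fun k => B k j)
    calc X i j ≤ |X i j| := le_abs_self _
      _ = Real.sqrt ((X i j) ^ 2) := (Real.sqrt_sq_eq_abs _).symm
      _ ≤ Real.sqrt (X i i * X j j) := Real.sqrt_le_sqrt h1
      _ = x i * x j := Real.sqrt_mul (hdiag i) _
  have htr : (M * X).trace = ∑ i, ∑ j, M i j * X j i := by
    simp [Matrix.trace, Matrix.diag, Matrix.mul_apply]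
  rw [htr, dotProduct, ]
  simp only [Matrix.mulVec, dotProduct]
  rw [show ∑ i, x i * ∑ j, M i j * x j = ∑ i, ∑ j, x i * (M i j * x j) by
    exact Finset.sum_congr rfl fun i _ => Finset.mul_sum _ _ _]
  refine Finset.sum_le_sum fun i _ => Finset.sum_le_sum fun j _ => ?_
  rcases eq_or_ne i j with rfl | hij
  · have : x i * (M i i * x i) = M i i * X i i := by
      rw [show x i * (M i i * x i) = M i i * (x i * x i) by ring,
        ← Real.sqrt_mul (hdiag i), Real.sqrt_mul_self (hdiag i)]
    rw [this]
  · have hM := hMetzler i j hij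
    calc M i j * X j i ≤ M i j * (x j * x i) := by
          exact mul_le_mul_of_nonneg_left (hCS j i) hM
      _ = x i * (M i j * x j) := by ring
end

section
/- Let M ∈ R₊^{m×m} be nonnegative with block structure given by selection matrices E_1,…,E_N of a disjoint partition of coordinates. Suppose there exists q ∈ R₊^m with ‖q‖ = 1 such that ‖E_k M q‖ ≥ ‖E_k q‖ for all k. Then there exists a block-diagonal entrywise nonnegative matrix Δ = diag(Δ₁,…,Δ_N) with ‖Δ‖ ≤ 1 such that ΔMq = q; in particular I − MΔ is singular. -/
theorem stmt11 {m N : ℕ} (b : Fin m → Fin N)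
    (M : Matrix (Fin m) (Fin m) ℝ) (hM : ∀ i j, 0 ≤ M i j)
    (q : Fin m → ℝ) (hq : ∀ i, 0 ≤ q i) (hq1 : _root_.enorm q = 1)
    (hineq : ∀ k, Real.sqrt (∑ i, if b i = k then q i ^ 2 else 0) ≤
      Real.sqrt (∑ i, if b i = k then (M.mulVec q) i ^ 2 else 0)) :
    ∃ Δ : Matrix (Fin m) (Fin m) ℝ,
      (∀ i j, 0 ≤ Δ i j) ∧ (∀ i j, b i ≠ b j → Δ i j = 0) ∧
      opNorm Δ ≤ 1 ∧ Δ.mulVec (M.mulVec q) = q ∧ ¬ IsUnit (1 - M * Δ) := by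
  classical
  set v : Fin m → ℝ := M.mulVec q with hv
  have hvnn : ∀ i, 0 ≤ v i := by
    intro i
    rw [hv]
    simp only [Matrix.mulVec, dotProduct]
    exact Finset.sum_nonneg fun j _ => mul_nonneg (hM i j) (hq j)
  set S : Fin N → ℝ := fun k => ∑ l, if b l = k then v l ^ 2 else 0 with hSdef
  set Q : Fin N → ℝ := fun k => ∑ l, if b l = k then q l ^ 2 else 0 with hQdef
  have hSnn : ∀ k, 0 ≤ S k := fun k =>
    Finset.sum_nonneg fun l _ => by split <;> positivity
  have hQnn : ∀ k, 0 ≤ Q k := fun k =>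
    Finset.sum_nonneg fun l _ => by split <;> positivity
  have hQS : ∀ k, Q k ≤ S k := by
    intro k
    nlinarith [Real.sq_sqrt (hQnn k), Real.sq_sqrt (hSnn k), Real.sqrt_nonneg (Q k),
      Real.sqrt_nonneg (S k), hineq k]
  -- if S k = 0 then every v on the block is 0 and every q on the block is 0
  have hSzero : ∀ k, S k = 0 → (∀ i, b i = k → v i = 0 ∧ q i = 0) := by
    intro k hk i hik
    have hQ0 : Q k = 0 := le_antisymm (hk ▸ hQS k) (hQnn k)
    constructor
    · have := (Finset.sum_eq_zero_iff_of_nonneg (fun l _ => by split <;> positivity)).mp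
        hk i (Finset.mem_univ i)
      simpa [hik] using this
    · have := (Finset.sum_eq_zero_iff_of_nonneg (fun l _ => by split <;> positivity)).mp
        hQ0 i (Finset.mem_univ i)
      simpa [hik] using this
  set Δ : Matrix (Fin m) (Fin m) ℝ :=
    fun i j => if b i = b j then q i * v j / S (b i) else 0 with hΔdef
  have hΔnn : ∀ i j, 0 ≤ Δ i j := by
    intro i j
    simp only [hΔdef]
    split
    · exact div_nonneg (mul_nonneg (hq i) (hvnn j)) (hSnn _)
    · exact le_refl 0
  have hΔblock : ∀ i j, b i ≠ b j → Δ i j = 0 := by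
    intro i j h; simp [hΔdef, h]
  -- key computation of Δ.mulVec x
  have hmul : ∀ (x : Fin m → ℝ) (i : Fin m),
      Δ.mulVec x i = q i * (∑ j, if b j = b i then v j * x j else 0) / S (b i) := by
    intro x i
    simp only [Matrix.mulVec, dotProduct, hΔdef]
    rw [Finset.mul_sum, Finset.sum_div]
    apply Finset.sum_congr rfl
    intro j _
    by_cases h : b i = b j
    · simp [h, eq_comm]
      ring
    · have h' : ¬ (b j = b i) := fun hh => h hh.symm
      simp [h, h']
  have hΔv : Δ.mulVec v = q := by
    funext i
    rw [hmul]
    have hsum : (∑ j, if b j = b i then v j * v j else 0) = S (b i) := by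
      simp only [hSdef]
      apply Finset.sum_congr rfl
      intro j _
      split <;> simp [sq]
    rw [hsum]
    rcases eq_or_lt_of_le (hSnn (b i)) with h0 | hpos
    · rw [← h0]
      have := (hSzero (b i) h0.symm i rfl).2
      simp [this]
    · field_simp
  -- operator norm bound
  have hopn : opNorm Δ ≤ 1 := by
    rw [opNorm]
    apply ContinuousLinearMap.opNorm_le_bound _ zero_le_one
    intro x
    rw [one_mul, LinearMap.coe_toContinuousLinearMap']
    have hnorm1 : ‖Matrix.toEuclideanLin Δ x‖
        = Real.sqrt (∑ i, (Δ.mulVec (fun j => x j) i) ^ 2) := by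
      rw [EuclideanSpace.norm_eq]
      congr 1
      apply Finset.sum_congr rfl
      intro i _
      rw [Real.norm_eq_abs, sq_abs]
      rfl
    have hnorm2 : ‖x‖ = Real.sqrt (∑ i, x i ^ 2) := by
      rw [EuclideanSpace.norm_eq]
      congr 1
      apply Finset.sum_congr rfl
      intros
      rw [Real.norm_eq_abs, sq_abs]
    rw [hnorm1, hnorm2]
    apply Real.sqrt_le_sqrt
    -- fiberwise comparison
    set c : Fin N → ℝ := fun k => ∑ j, if b j = k then v j * x j else 0 with hcdef
    have hterm : ∀ i, (Δ.mulVec (fun j => x j) i) ^ 2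
        = q i ^ 2 * (c (b i) / S (b i)) ^ 2 := by
      intro i
      rw [hmul]
      rw [div_pow, mul_pow, mul_div_assoc, div_pow]
    calc ∑ i, (Δ.mulVec (fun j => x j) i) ^ 2
        = ∑ k, ∑ i ∈ Finset.univ.filter (fun i => b i = k),
            q i ^ 2 * (c (b i) / S (b i)) ^ 2 := by
          simp_rw [hterm]
          rw [Finset.sum_fiberwise_of_maps_to (fun i _ => Finset.mem_univ (b i))]
      _ = ∑ k, Q k * (c k / S k) ^ 2 := by
          apply Finset.sum_congr rfl
          intro k _
          rw [hQdef]
          simp only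
          rw [Finset.sum_filter, Finset.sum_mul]
          apply Finset.sum_congr rfl
          intro i _
          by_cases h : b i = k <;> simp [h]
      _ ≤ ∑ k, ∑ i ∈ Finset.univ.filter (fun i => b i = k), x i ^ 2 := by
          apply Finset.sum_le_sum
          intro k _
          set X : ℝ := ∑ i ∈ Finset.univ.filter (fun i => b i = k), x i ^ 2 with hXdef
          have hXnn : 0 ≤ X := Finset.sum_nonneg fun i _ => sq_nonneg _
          rcases eq_or_lt_of_le (hSnn k) with h0 | hpos
          · have hc0 : c k = 0 := by
              rw [hcdef]
              apply Finset.sum_eq_zero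
              intro j _
              by_cases h : b j = k
              · simp [h, (hSzero k h0.symm j h).1]
              · simp [h]
            simp [hc0, hXnn]
          · -- Cauchy–Schwarz
            have hCS : c k ^ 2 ≤ S k * X := by
              have := Finset.sum_mul_sq_le_sq_mul_sq
                (Finset.univ.filter (fun i => b i = k)) v x
              have hc : c k = ∑ i ∈ Finset.univ.filter (fun i => b i = k), v i * x i := by
                rw [hcdef, Finset.sum_filter]
              have hs : S k = ∑ i ∈ Finset.univ.filter (fun i => b i = k), v i ^ 2 := by
                rw [hSdef, Finset.sum_filter]
              rw [hc, hs, hXdef]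
              exact this
            have hQk := hQS k
            have key : Q k * c k ^ 2 ≤ X * S k ^ 2 := by
              calc Q k * c k ^ 2 ≤ S k * (S k * X) :=
                    mul_le_mul hQk hCS (sq_nonneg _) (le_of_lt hpos)
                _ = X * S k ^ 2 := by ring
            calc Q k * (c k / S k) ^ 2 = Q k * c k ^ 2 / S k ^ 2 := by
                  rw [div_pow]; ring
              _ ≤ X := by rw [div_le_iff₀ (by positivity)]; exact key
      _ = ∑ i, x i ^ 2 := Finset.sum_fiberwise_of_maps_to (fun i _ => Finset.mem_univ (b i)) _
  -- singularity
  have hqne : q ≠ 0 := by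
    intro h
    rw [_root_.enorm, h] at hq1
    simp at hq1
  have hker : (1 - Δ * M).mulVec q = 0 := by
    have : (Δ * M).mulVec q = q := by
      rw [← Matrix.mulVec_mulVec, hΔv]
    rw [Matrix.sub_mulVec, this, Matrix.one_mulVec, sub_self]
  have hdet : (1 - Δ * M).det = 0 :=
    (Matrix.exists_mulVec_eq_zero_iff).mp ⟨q, hqne, hker⟩
  have hdet2 : (1 - M * Δ).det = 0 := by
    have h1 : (1 : Matrix (Fin m) (Fin m) ℝ) - M * Δ = 1 + M * (-Δ) := by
      rw [Matrix.mul_neg, ← sub_eq_add_neg]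
    have h2 : (1 : Matrix (Fin m) (Fin m) ℝ) - Δ * M = 1 + (-Δ) * M := by
      rw [Matrix.neg_mul, ← sub_eq_add_neg]
    rw [h1, Matrix.det_one_add_mul_comm, ← h2, hdet]
  refine ⟨Δ, hΔnn, hΔblock, hopn, hΔv, ?_⟩
  intro hunit
  have := (Matrix.isUnit_iff_isUnit_det _).mp hunit
  rw [hdet2] at this
  exact this.ne_zero rfl
end

section
/- Let Ĝ: R → C^{m×m} be a transfer matrix such that Ĝ(0) is real and entrywise nonnegative and |Ĝ(jω)_{ik}| ≤ Ĝ(0)_{ik} for all ω ∈ R and all i,k. Then σ̄(Ĝ(jω)) ≤ σ̄(Ĝ(0)) for all ω ∈ R. -/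
theorem stmt16 {m : ℕ} (G : ℝ → Matrix (Fin m) (Fin m) ℂ)
    (G0 : Matrix (Fin m) (Fin m) ℝ) (hG0 : ∀ i k, 0 ≤ G0 i k)
    (hzero : G 0 = G0.map Complex.ofReal)
    (hdom : ∀ ω i k, ‖G ω i k‖ ≤ G0 i k) :
    ∀ ω, opNormC (G ω) ≤ opNormC (G 0) := by
  intro ω
  unfold opNormC
  apply ContinuousLinearMap.opNorm_le_bound _ (norm_nonneg _)
  intro x
  -- y : the entrywise absolute value of x, as a complex Euclidean vector
  set y : EuclideanSpace ℂ (Fin m) :=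
    (WithLp.equiv 2 (Fin m → ℂ)).symm (fun k => (‖x k‖ : ℂ)) with hy
  have hynorm : ‖y‖ = ‖x‖ := by
    rw [EuclideanSpace.norm_eq, EuclideanSpace.norm_eq]
    congr 1
    apply Finset.sum_congr rfl
    intro k _
    have hk : y k = (‖x k‖ : ℂ) := rfl
    rw [hk, Complex.norm_real, Real.norm_of_nonneg (norm_nonneg _)]
  have key : ‖(Matrix.toEuclideanLin (G ω)).toContinuousLinearMap x‖
      ≤ ‖(Matrix.toEuclideanLin (G 0)).toContinuousLinearMap y‖ := by
    simp only [LinearMap.coe_toContinuousLinearMap']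
    rw [EuclideanSpace.norm_eq, EuclideanSpace.norm_eq]
    apply Real.sqrt_le_sqrt
    apply Finset.sum_le_sum
    intro i _
    have h1 : ‖Matrix.toEuclideanLin (G ω) x i‖ ≤
        ∑ k, G0 i k * ‖x k‖ := by
      show ‖(G ω).mulVec (WithLp.equiv 2 (Fin m → ℂ) x) i‖ ≤ _
      simp only [Matrix.mulVec, dotProduct]
      calc ‖∑ k, G ω i k * (WithLp.equiv 2 (Fin m → ℂ)) x k‖
          ≤ ∑ k, ‖G ω i k * (WithLp.equiv 2 (Fin m → ℂ)) x k‖ := norm_sum_le _ _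
        _ ≤ ∑ k, G0 i k * ‖x k‖ := by
            apply Finset.sum_le_sum
            intro k _
            rw [norm_mul]
            exact mul_le_mul_of_nonneg_right (hdom ω i k) (norm_nonneg _)
    have h2 : ‖Matrix.toEuclideanLin (G 0) y i‖ =
        ∑ k, G0 i k * ‖x k‖ := by
      show ‖(G 0).mulVec (WithLp.equiv 2 (Fin m → ℂ) y) i‖ = _
      simp only [Matrix.mulVec, dotProduct, hzero, Matrix.map_apply, hy]
      have : ∑ k, (G0 i k : ℂ) * ((WithLp.equiv 2 (Fin m → ℂ))
          ((WithLp.equiv 2 (Fin m → ℂ)).symm fun k => (‖x k‖ : ℂ)) k)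
          = ((∑ k, G0 i k * ‖x k‖ : ℝ) : ℂ) := by
        push_cast
        simp
      rw [this, Complex.norm_real, Real.norm_of_nonneg]
      exact Finset.sum_nonneg fun k _ => mul_nonneg (hG0 i k) (norm_nonneg _)
    rw [h2]
    have := norm_nonneg (Matrix.toEuclideanLin (G ω) x i)
    nlinarith [h1]
  calc ‖(Matrix.toEuclideanLin (G ω)).toContinuousLinearMap x‖
      ≤ ‖(Matrix.toEuclideanLin (G 0)).toContinuousLinearMap y‖ := key
    _ ≤ ‖(Matrix.toEuclideanLin (G 0)).toContinuousLinearMap‖ * ‖y‖ :=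
        ContinuousLinearMap.le_opNorm _ _
    _ = _ := by rw [hynorm]
end
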